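/- arXiv:2310.11129 — 3 statements merged into one kernel-verified Lean document; each statement's English description precedes it below -/
import Mathlib

section
/- Define polynomials q_j ∈ F_2[w_2, w_3, w_4] by q_0 = 1, q_{<0} = 0, and q_j = w_2 q_{j−2} + w_3 q_{j−3} + w_4 q_{j−4}. Then q_{2^t − 3} = 0 for all t ≥ 2. -/
open MvPolynomial

/-- The polynomials `q j ∈ F₂[w₂,w₃,w₄]` (with `w₂ = X 0`, `w₃ = X 1`, `w₄ = X 2`):
`q 0 = 1`, `q j = 0` for `j < 0`, and `q j = w₂ q (j-2) + w₃ q (j-3) + w₄ q (j-4)`. -/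
noncomputable def q4 (j : ℤ) : MvPolynomial (Fin 3) (ZMod 2) :=
  if j < 0 then 0
  else if j = 0 then 1
  else X 0 * q4 (j - 2) + X 1 * q4 (j - 3) + X 2 * q4 (j - 4)
termination_by j.toNat
decreasing_by all_goals omega

lemma q4_neg {j : ℤ} (h : j < 0) : q4 j = 0 := by
  rw [q4]; simp [h]

lemma q4_zero : q4 0 = 1 := by
  rw [q4]; norm_num

lemma q4_rec {j : ℤ} (h : 1 ≤ j) :
    q4 j = X 0 * q4 (j - 2) + X 1 * q4 (j - 3) + X 2 * q4 (j - 4) := by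
  rw [q4]
  have h1 : ¬ j < 0 := by omega
  have h2 : ¬ j = 0 := by omega
  simp [h1, h2]

/-- The Frobenius-type substitution squaring each variable. -/
noncomputable def φ4 : MvPolynomial (Fin 3) (ZMod 2) →ₐ[ZMod 2] MvPolynomial (Fin 3) (ZMod 2) :=
  aeval (fun i => (X i : MvPolynomial (Fin 3) (ZMod 2)) ^ 2)

lemma two_eq_zero' : (2 : MvPolynomial (Fin 3) (ZMod 2)) = 0 := by
  have := CharP.cast_eq_zero (MvPolynomial (Fin 3) (ZMod 2)) 2
  simpa using this

/-- Doubling formulas. -/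
lemma q4_doubling : ∀ (N : ℕ) (m : ℤ), m ≤ N →
    (q4 (2 * m) = φ4 (q4 m) + X 0 * φ4 (q4 (m - 1)) + X 2 * φ4 (q4 (m - 2)) ∧
     q4 (2 * m + 1) = X 1 * φ4 (q4 (m - 1))) := by
  intro N
  induction N with
  | zero =>
    intro m hm
    rcases lt_or_eq_of_le hm with h | h
    · have h1 : m < 0 := by exact_mod_cast by omega
      constructor
      · rw [q4_neg (by omega), q4_neg h1, q4_neg (by omega), q4_neg (by omega)]
        simp
      · rw [q4_neg (by omega), q4_neg (by omega)]
        simp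
    · have h0 : m = 0 := by exact_mod_cast h
      subst h0
      constructor
      · rw [show (2 * (0:ℤ)) = 0 by ring, q4_zero, q4_neg (show (0:ℤ) - 1 < 0 by omega),
          q4_neg (show (0:ℤ) - 2 < 0 by omega)]
        simp
      · rw [show (2 * (0:ℤ) + 1) = 1 by ring, q4_rec (le_refl 1)]
        rw [q4_neg (by omega), q4_neg (by omega), q4_neg (by omega),
          q4_neg (show (0:ℤ) - 1 < 0 by omega)]
        simp
  | succ N ih =>
    intro m hm
    rcases lt_or_eq_of_le hm with h | h
    · exact ih m (by exact_mod_cast by omega)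
    have hm' : m = (N : ℤ) + 1 := by exact_mod_cast h
    by_cases hN : m ≤ 1
    · -- m = 1 (or smaller, handled by ih when N ≥ 1)
      rcases lt_or_eq_of_le hN with h1 | h1
      · exact ih m (by omega)
      subst h1
      constructor
      · rw [show (2 * (1:ℤ)) = 2 by ring, q4_rec (show (1:ℤ) ≤ 2 by omega)]
        rw [show (2:ℤ) - 2 = 0 by ring, q4_zero,
          q4_neg (show (2:ℤ) - 3 < 0 by omega), q4_neg (show (2:ℤ) - 4 < 0 by omega)]
        rw [show (1:ℤ) - 1 = 0 by ring, q4_zero, q4_neg (show (1:ℤ) - 2 < 0 by omega)]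
        have : q4 1 = 0 := by
          rw [q4_rec (le_refl 1), q4_neg (by omega), q4_neg (by omega), q4_neg (by omega)]
          simp
        rw [this]
        simp
      · rw [show (2 * (1:ℤ) + 1) = 3 by ring, q4_rec (show (1:ℤ) ≤ 3 by omega)]
        have h1 : q4 1 = 0 := by
          rw [q4_rec (le_refl 1), q4_neg (by omega), q4_neg (by omega), q4_neg (by omega)]
          simp
        rw [show (3:ℤ) - 2 = 1 by ring, h1, show (3:ℤ) - 3 = 0 by ring, q4_zero,
          q4_neg (show (3:ℤ) - 4 < 0 by omega),
          show (1:ℤ) - 1 = 0 by ring, q4_zero]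
        simp
    · -- m ≥ 2
      push_neg at hN
      have hm2 : 2 ≤ m := by omega
      have e1 := (ih (m - 1) (by omega)).1   -- even at m-1
      have e2 := (ih (m - 2) (by omega)).1   -- even at m-2
      have o1 := (ih (m - 1) (by omega)).2   -- odd at m-1
      have o2 := (ih (m - 2) (by omega)).2   -- odd at m-2
      have hrecm : q4 m = X 0 * q4 (m - 2) + X 1 * q4 (m - 3) + X 2 * q4 (m - 4) :=
        q4_rec (by omega)
      have hφ : φ4 (q4 m) = X 0 ^ 2 * φ4 (q4 (m - 2)) + X 1 ^ 2 * φ4 (q4 (m - 3))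
          + X 2 ^ 2 * φ4 (q4 (m - 4)) := by
        rw [hrecm]
        simp [φ4, mul_comm]
      constructor
      · rw [q4_rec (show (1:ℤ) ≤ 2 * m by omega)]
        rw [show (2 * m - 2 : ℤ) = 2 * (m - 1) by ring,
            show (2 * m - 3 : ℤ) = 2 * (m - 2) + 1 by ring,
            show (2 * m - 4 : ℤ) = 2 * (m - 2) by ring]
        rw [e1, o2, e2, hφ]
        rw [show (m - 1 - 1 : ℤ) = m - 2 by ring, show (m - 1 - 2 : ℤ) = m - 3 by ring,
            show (m - 2 - 1 : ℤ) = m - 3 by ring, show (m - 2 - 2 : ℤ) = m - 4 by ring]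
        linear_combination (X 0 * X 2 * φ4 (q4 (m - 3))) * two_eq_zero'
      · rw [q4_rec (show (1:ℤ) ≤ 2 * m + 1 by omega)]
        rw [show (2 * m + 1 - 2 : ℤ) = 2 * (m - 1) + 1 by ring,
            show (2 * m + 1 - 3 : ℤ) = 2 * (m - 1) by ring,
            show (2 * m + 1 - 4 : ℤ) = 2 * (m - 2) + 1 by ring]
        rw [o1, e1, o2]
        rw [show (m - 1 - 1 : ℤ) = m - 2 by ring, show (m - 1 - 2 : ℤ) = m - 3 by ring,
            show (m - 2 - 1 : ℤ) = m - 3 by ring]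
        linear_combination (X 0 * X 1 * φ4 (q4 (m - 2)) + X 1 * X 2 * φ4 (q4 (m - 3)))
          * two_eq_zero'

/-- **Korbaš.** `q_{2^t − 3} = 0` in `F₂[w₂,w₃,w₄]` for all `t ≥ 2`. -/
theorem q4_two_power_sub_three_eq_zero (t : ℕ) (ht : 2 ≤ t) :
    q4 (2 ^ t - 3) = 0 := by
  induction t with
  | zero => omega
  | succ t ih =>
    by_cases h2 : 2 ≤ t
    · have key := (q4_doubling (2 ^ t) (2 ^ t - 2) (by push_cast; omega)).2
      rw [show ((2:ℤ) ^ (t + 1) - 3) = 2 * ((2:ℤ) ^ t - 2) + 1 by ring, key,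
        show ((2:ℤ) ^ t - 2 - 1) = 2 ^ t - 3 by ring, ih h2]
      simp
    · -- t + 1 = 2, i.e. index 1
      interval_cases t
      · omega
      · rw [show ((2:ℤ) ^ (1 + 1) - 3) = 1 by norm_num, q4_rec (le_refl 1),
          q4_neg (by omega), q4_neg (by omega), q4_neg (by omega)]
        simp
end

section
/- Let q_j, r_j ∈ F_2[w_2, w_3] with q_0 = r_0 = 1, q_{<0} = r_{<0} = 0, q_j = w_2 q_{j−2} + w_3 q_{j−3}, r_{j+1} = w_2 r_j + w_3² r_{j−2}. Fix t ≥ 3 and suppose n satisfies 2^{t−1} − 1 ≤ n ≤ 2^t − 3; set i = 2^t − 3 − n and j = n − 2^{t−1} + 1. Then: w_3 r_{j−2} q_i + r_{j−1} q_{i+1} = q_{n−2}, r_j q_i + w_3 r_{j−1} q_{i−1} = q_{n−1}, and r_j q_{i+1} + w_3² r_{j−2} q_{i−1} = q_n. -/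
open MvPolynomial

/-- The polynomials `q j ∈ F₂[w₂,w₃]` (with `w₂ = X 0`, `w₃ = X 1`): `q 0 = 1`,
`q j = 0` for `j < 0`, and `q j = w₂ q (j-2) + w₃ q (j-3)`. -/
noncomputable def q3 (j : ℤ) : MvPolynomial (Fin 2) (ZMod 2) :=
  if j < 0 then 0
  else if j = 0 then 1
  else X 0 * q3 (j - 2) + X 1 * q3 (j - 3)
termination_by j.toNat
decreasing_by all_goals omega

/-- The polynomials `r j ∈ F₂[w₂,w₃]`: `r 0 = 1`, `r j = 0` for `j < 0`, and
`r (j+1) = w₂ r j + w₃² r (j-2)`, i.e. `r j = w₂ r (j-1) + w₃² r (j-3)` for `j ≥ 1`. -/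
noncomputable def r3 (j : ℤ) : MvPolynomial (Fin 2) (ZMod 2) :=
  if j < 0 then 0
  else if j = 0 then 1
  else X 0 * r3 (j - 1) + (X 1) ^ 2 * r3 (j - 3)
termination_by j.toNat
decreasing_by all_goals omega

lemma q3_neg {j : ℤ} (h : j < 0) : q3 j = 0 := by rw [q3, if_pos h]
lemma q3_zero : q3 0 = 1 := by rw [q3]; norm_num
lemma q3_rec {j : ℤ} (h : 1 ≤ j) : q3 j = X 0 * q3 (j - 2) + X 1 * q3 (j - 3) := by
  rw [q3, if_neg (by omega), if_neg (by omega)]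
lemma r3_neg {j : ℤ} (h : j < 0) : r3 j = 0 := by rw [r3, if_pos h]
lemma r3_zero : r3 0 = 1 := by rw [r3]; norm_num
lemma r3_rec {j : ℤ} (h : 1 ≤ j) : r3 j = X 0 * r3 (j - 1) + (X 1) ^ 2 * r3 (j - 3) := by
  rw [r3, if_neg (by omega), if_neg (by omega)]

lemma htwo : (2 : MvPolynomial (Fin 2) (ZMod 2)) = 0 := by
  have : ((2:ℕ) : MvPolynomial (Fin 2) (ZMod 2)) = 0 := CharP.cast_eq_zero _ 2
  exact_mod_cast this

lemma doubling_aux : ∀ (N : ℕ) (m : ℤ), m ≤ N →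
    (q3 (2*m) = q3 m ^ 2 + X 0 * q3 (m-1) ^ 2 ∧
     q3 (2*m+1) = X 1 * q3 (m-1) ^ 2 ∧
     r3 (2*m) = r3 m ^ 2 ∧
     r3 (2*m+1) = X 0 * r3 m ^ 2 + (X 1) ^ 2 * r3 (m-1) ^ 2) := by
  have base : ∀ m : ℤ, m ≤ 0 →
      (q3 (2*m) = q3 m ^ 2 + X 0 * q3 (m-1) ^ 2 ∧
       q3 (2*m+1) = X 1 * q3 (m-1) ^ 2 ∧
       r3 (2*m) = r3 m ^ 2 ∧
       r3 (2*m+1) = X 0 * r3 m ^ 2 + (X 1) ^ 2 * r3 (m-1) ^ 2) := by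
    intro m hm
    rcases eq_or_lt_of_le hm with h0 | h1
    · subst h0
      have hq1 : q3 (-1) = 0 := q3_neg (by norm_num)
      have hq2 : q3 (-2) = 0 := q3_neg (by norm_num)
      have hr1 : r3 (-1) = 0 := r3_neg (by norm_num)
      have hr2 : r3 (-2) = 0 := r3_neg (by norm_num)
      refine ⟨?_, ?_, ?_, ?_⟩
      · rw [show (2*(0:ℤ)) = 0 by ring, show ((0:ℤ)-1) = -1 by ring, q3_zero, hq1]; ring
      · rw [show (2*(0:ℤ)+1) = 1 by ring, q3_rec (by norm_num),
          show ((1:ℤ)-2) = -1 by ring, show ((1:ℤ)-3) = -2 by ring,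
          show ((0:ℤ)-1) = -1 by ring, hq1, hq2]; ring
      · rw [show (2*(0:ℤ)) = 0 by ring, r3_zero]; ring
      · rw [show (2*(0:ℤ)+1) = 1 by ring, r3_rec (by norm_num),
          show ((1:ℤ)-1) = 0 by ring, show ((1:ℤ)-3) = -2 by ring,
          show ((0:ℤ)-1) = -1 by ring, r3_zero, hr1, hr2]; ring
    · refine ⟨?_, ?_, ?_, ?_⟩ <;>
        simp only [q3_neg (show (2*m:ℤ) < 0 by omega), q3_neg (show (2*m+1:ℤ) < 0 by omega),
            q3_neg (show (m-1:ℤ) < 0 by omega), q3_neg h1,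
            r3_neg (show (2*m:ℤ) < 0 by omega), r3_neg (show (2*m+1:ℤ) < 0 by omega),
            r3_neg (show (m-1:ℤ) < 0 by omega), r3_neg h1] <;> ring
  intro N
  induction N with
  | zero => intro m hm; exact base m (by exact_mod_cast hm)
  | succ n ih =>
    intro m hm
    rcases le_or_gt m n with h | h
    · exact ih m h
    rcases le_or_gt m 0 with h0 | hm1
    · exact base m h0
    have hmn : (m - 1 : ℤ) ≤ n := by push_cast at hm h ⊢; omega
    obtain ⟨A1, B1, C1, D1⟩ := ih (m-1) hmn
    obtain ⟨A2, B2, C2, D2⟩ := ih (m-2) (by omega)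
    have Cm : r3 (2*m) = r3 m ^ 2 := by
      rw [r3_rec (show (1:ℤ) ≤ 2*m by omega),
        show (2*m-1 : ℤ) = 2*(m-1)+1 by ring, show (2*m-3:ℤ) = 2*(m-2)+1 by ring,
        D1, D2, r3_rec hm1,
        show (m-1-1:ℤ) = m-2 by ring, show (m-2-1:ℤ) = m-3 by ring]
      linear_combination (X 0 * (X 1)^2 * r3 (m-2)^2 - X 0 * (X 1)^2 * r3 (m-1) * r3 (m-3)) * htwo
    refine ⟨?_, ?_, Cm, ?_⟩
    · rw [q3_rec (show (1:ℤ) ≤ 2*m by omega),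
        show (2*m-2 : ℤ) = 2*(m-1) by ring, show (2*m-3:ℤ) = 2*(m-2)+1 by ring,
        A1, B2, q3_rec hm1,
        show (m-1-1:ℤ) = m-2 by ring, show (m-2-1:ℤ) = m-3 by ring]
      linear_combination (-(X 0 * X 1 * q3 (m-2) * q3 (m-3))) * htwo
    · rw [q3_rec (show (1:ℤ) ≤ 2*m+1 by omega),
        show (2*m+1-2 : ℤ) = 2*(m-1)+1 by ring, show (2*m+1-3:ℤ) = 2*(m-1) by ring,
        B1, A1, show (m-1-1:ℤ) = m-2 by ring]
      linear_combination (X 0 * X 1 * q3 (m-2)^2) * htwo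
    · rw [r3_rec (show (1:ℤ) ≤ 2*m+1 by omega),
        show (2*m+1-1 : ℤ) = 2*m by ring, show (2*m+1-3:ℤ) = 2*(m-1) by ring,
        Cm, C1]

lemma qdub (m : ℤ) : q3 (2*m) = q3 m ^ 2 + X 0 * q3 (m-1) ^ 2 :=
  (doubling_aux m.toNat m (by omega)).1
lemma qodd (m : ℤ) : q3 (2*m+1) = X 1 * q3 (m-1) ^ 2 :=
  (doubling_aux m.toNat m (by omega)).2.1
lemma rdub (m : ℤ) : r3 (2*m) = r3 m ^ 2 :=
  (doubling_aux m.toNat m (by omega)).2.2.1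
lemma rodd (m : ℤ) : r3 (2*m+1) = X 0 * r3 m ^ 2 + (X 1) ^ 2 * r3 (m-1) ^ 2 :=
  (doubling_aux m.toNat m (by omega)).2.2.2

lemma q3_pow2 (t : ℕ) : q3 (2^t - 3) = 0 := by
  induction t with
  | zero => exact q3_neg (by norm_num)
  | succ n ih =>
    rw [show ((2:ℤ)^(n+1) - 3) = 2*(2^n - 2) + 1 by rw [pow_succ]; ring, qodd,
      show ((2:ℤ)^n - 2 - 1) = 2^n - 3 by ring, ih]
    ring

lemma r3_q3_pow2 (t : ℕ) : r3 (2^t - 1) = q3 (2^(t+1) - 2) ∧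
    r3 (2^t - 2) = (q3 (2^t - 2))^2 := by
  induction t with
  | zero =>
    constructor
    · norm_num [r3_zero, q3_zero]
    · rw [show ((2:ℤ)^0 - 2) = -1 by norm_num, r3_neg (by norm_num), q3_neg (by norm_num)]
      ring
  | succ n ih =>
    obtain ⟨ih1, ih2⟩ := ih
    have e2 : r3 (2^(n+1) - 2) = (q3 (2^(n+1) - 2))^2 := by
      rw [show ((2:ℤ)^(n+1) - 2) = 2*(2^n - 1) by rw [pow_succ]; ring, rdub, ih1,
        show (2*((2:ℤ)^n - 1)) = 2^(n+1) - 2 by rw [pow_succ]; ring]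
    refine ⟨?_, e2⟩
    rw [show ((2:ℤ)^(n+1) - 1) = 2*(2^n - 1) + 1 by rw [pow_succ]; ring, rodd,
      show ((2:ℤ)^n - 1 - 1) = 2^n - 2 by ring, ih1, ih2]
    rw [show ((2:ℤ)^(n+1+1) - 2) = 2*(2^(n+1) - 1) by rw [pow_succ _ (n+1)]; ring, qdub,
      show ((2:ℤ)^(n+1) - 1 - 1) = 2^(n+1) - 2 by ring,
      show ((2:ℤ)^(n+1) - 1) = 2*(2^n - 1) + 1 by rw [pow_succ]; ring, qodd,
      show ((2:ℤ)^n - 1 - 1) = 2^n - 2 by ring]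
    ring

lemma main3 : ∀ (s : ℕ) (i j : ℤ), 0 ≤ i → 0 ≤ j → i + j = 2^s - 2 →
    (X 1 * r3 (j - 2) * q3 i + r3 (j - 1) * q3 (i + 1) = q3 (i + 2*j - 1)) ∧
    (r3 j * q3 i + X 1 * r3 (j - 1) * q3 (i - 1) = q3 (i + 2*j)) ∧
    (r3 j * q3 (i + 1) + (X 1) ^ 2 * r3 (j - 2) * q3 (i - 1) = q3 (i + 2*j + 1)) := by
  intro s
  induction s with
  | zero => intro i j hi hj hsum; norm_num at hsum; omega
  | succ s ih =>
    intro i j hi hj hsum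
    have hM1 : (0:ℤ) < 2^s := pow_pos (by norm_num) s
    have L1s : q3 ((2:ℤ)^s - 3) = 0 := q3_pow2 s
    have L1s1 : q3 ((2:ℤ)^(s+1) - 3) = 0 := q3_pow2 (s+1)
    have L2s : r3 ((2:ℤ)^s - 1) = q3 ((2:ℤ)^(s+1) - 2) := (r3_q3_pow2 s).1
    have hpow : (2:ℤ)^(s+1) = 2 * 2^s := by rw [pow_succ]; ring
    rw [hpow] at hsum L1s1 L2s
    obtain ⟨M, hM⟩ : ∃ M:ℤ, (2:ℤ)^s = M := ⟨_, rfl⟩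
    rw [hM] at hsum L1s L1s1 L2s hM1
    have ih' : ∀ i' j' : ℤ, 0 ≤ i' → 0 ≤ j' → i' + j' = M - 2 →
        (X 1 * r3 (j' - 2) * q3 i' + r3 (j' - 1) * q3 (i' + 1) = q3 (i' + 2*j' - 1)) ∧
        (r3 j' * q3 i' + X 1 * r3 (j' - 1) * q3 (i' - 1) = q3 (i' + 2*j')) ∧
        (r3 j' * q3 (i' + 1) + (X 1) ^ 2 * r3 (j' - 2) * q3 (i' - 1) = q3 (i' + 2*j' + 1)) := by
      intro i' j' h1 h2 h3
      exact ih i' j' h1 h2 (by rw [hM]; omega)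
    rcases Int.even_or_odd i with ⟨a, ha⟩ | ⟨a, ha⟩
    · -- EVEN case: i = 2a, j = 2b
      obtain ⟨b, hb⟩ : ∃ b:ℤ, j = 2*b := ⟨M - 1 - a, by omega⟩
      have ha0 : 0 ≤ a := by omega
      have hb0 : 0 ≤ b := by omega
      have hab : a + b = M - 1 := by omega
      have hA : r3 (b-1) * q3 a + X 1 * r3 (b-2) * q3 (a-1) = q3 (a + 2*b - 2) := by
        rcases le_or_gt 1 b with hb1 | hb1
        · have := (ih' a (b-1) (by omega) (by omega) (by omega)).2.1
          rw [show (b-1-1:ℤ) = b-2 by ring, show (a+2*(b-1):ℤ) = a+2*b-2 by ring] at this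
          exact this
        · rw [show b = 0 by omega, r3_neg (by norm_num : ((0:ℤ)-1) < 0),
            r3_neg (by norm_num : ((0:ℤ)-2) < 0),
            show (a + 2*0 - 2 : ℤ) = M - 3 by omega, L1s]
          ring
      have hB : r3 b * q3 a + (X 1)^2 * r3 (b-2) * q3 (a-2) = q3 (a + 2*b) := by
        rcases le_or_gt 1 a with ha1 | ha1
        · have := (ih' (a-1) b (by omega) hb0 (by omega)).2.2
          rw [show (a-1+1:ℤ) = a by ring, show (a-1-1:ℤ) = a-2 by ring,
            show (a-1+2*b+1:ℤ) = a+2*b by ring] at this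
          exact this
        · rw [show a = 0 by omega, q3_zero, q3_neg (by norm_num : ((0:ℤ)-2) < 0),
            show (0 + 2*b : ℤ) = 2*M - 2 by omega, show (b:ℤ) = M - 1 by omega, L2s]
          ring
      have hC : r3 b * q3 (a-1) + X 1 * r3 (b-1) * q3 (a-2) = q3 (a + 2*b - 1) := by
        rcases le_or_gt 1 a with ha1 | ha1
        · have := (ih' (a-1) b (by omega) hb0 (by omega)).2.1
          rw [show (a-1-1:ℤ) = a-2 by ring, show (a-1+2*b:ℤ) = a+2*b-1 by ring] at this
          exact this
        · rw [show a = 0 by omega, q3_neg (by norm_num : ((0:ℤ)-1) < 0),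
            q3_neg (by norm_num : ((0:ℤ)-2) < 0),
            show (0 + 2*b - 1 : ℤ) = 2*M - 3 by omega, L1s1]
          ring
      rw [show i = 2*a by omega, show j = 2*b by omega]
      refine ⟨?_, ?_, ?_⟩
      · rw [show (2*b-2:ℤ) = 2*(b-1) by ring, rdub (b-1), qdub a,
          show (2*b-1:ℤ) = 2*(b-1)+1 by ring, rodd (b-1),
          show (2*a+1:ℤ) = 2*a+1 by ring, qodd a,
          show (2*a + 2*(2*b) - 1 : ℤ) = 2*(a+2*b-1)+1 by ring, qodd (a+2*b-1),
          show (b-1-1:ℤ) = b-2 by ring, show (a+2*b-1-1:ℤ) = a+2*b-2 by ring]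
        linear_combination (X 1*(r3 (b-1)*q3 a + X 1*r3 (b-2)*q3 (a-1) + q3 (a+2*b-2))) * hA
          + (-((X 1)^2 * q3 a * q3 (a-1) * r3 (b-1) * r3 (b-2))
             + X 0 * X 1 * q3 (a-1)^2 * r3 (b-1)^2) * htwo
      · rw [rdub b, qdub a, show (2*b-1:ℤ) = 2*(b-1)+1 by ring, rodd (b-1),
          show (2*a-1:ℤ) = 2*(a-1)+1 by ring, qodd (a-1),
          show (2*a + 2*(2*b) : ℤ) = 2*(a+2*b) by ring, qdub (a+2*b),
          show (b-1-1:ℤ) = b-2 by ring, show (a-1-1:ℤ) = a-2 by ring]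
        linear_combination (r3 b*q3 a + (X 1)^2*r3 (b-2)*q3 (a-2) + q3 (a+2*b)) * hB
          + (X 0*(r3 b*q3 (a-1) + X 1*r3 (b-1)*q3 (a-2) + q3 (a+2*b-1))) * hC
          + (-((X 1)^2*q3 a*q3 (a-2)*r3 b*r3 (b-2))
             - X 0*X 1*q3 (a-1)*q3 (a-2)*r3 b*r3 (b-1)) * htwo
      · rw [rdub b, qodd a, show (2*b-2:ℤ) = 2*(b-1) by ring, rdub (b-1),
          show (2*a-1:ℤ) = 2*(a-1)+1 by ring, qodd (a-1),
          show (2*a + 2*(2*b) + 1 : ℤ) = 2*(a+2*b)+1 by ring, qodd (a+2*b),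
          show (a-1-1:ℤ) = a-2 by ring, show (a+2*b-1:ℤ) = a+2*b-1 by ring]
        linear_combination (X 1*(r3 b*q3 (a-1) + X 1*r3 (b-1)*q3 (a-2) + q3 (a+2*b-1))) * hC
          + (-((X 1)^2*q3 (a-1)*q3 (a-2)*r3 b*r3 (b-1))) * htwo
    · -- ODD case: i = 2a+1, j = 2b+1
      obtain ⟨b, hb⟩ : ∃ b:ℤ, j = 2*b+1 := ⟨M - 2 - a, by omega⟩
      have ha0 : 0 ≤ a := by omega
      have hb0 : 0 ≤ b := by omega
      obtain ⟨h1e, h2e, h3e⟩ := ih' a b ha0 hb0 (by omega)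
      have qrec : q3 (a+2*b+2) = X 0 * q3 (a+2*b) + X 1 * q3 (a+2*b-1) := by
        rw [q3_rec (by omega : (1:ℤ) ≤ a+2*b+2),
          show (a+2*b+2-2:ℤ) = a+2*b by ring, show (a+2*b+2-3:ℤ) = a+2*b-1 by ring]
      rw [show i = 2*a+1 by omega, show j = 2*b+1 by omega]
      refine ⟨?_, ?_, ?_⟩
      · rw [show (2*b+1-2:ℤ) = 2*(b-1)+1 by ring, rodd (b-1), qodd a,
          show (2*b+1-1:ℤ) = 2*b by ring, rdub b,
          show (2*a+1+1:ℤ) = 2*(a+1) by ring, qdub (a+1),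
          show (2*a+1 + 2*(2*b+1) - 1 : ℤ) = 2*(a+2*b+1) by ring, qdub (a+2*b+1),
          show (b-1-1:ℤ) = b-2 by ring, show (a+1-1:ℤ) = a by ring,
          show (a+2*b+1-1:ℤ) = a+2*b by ring]
        linear_combination (r3 b*q3 (a+1) + (X 1)^2*r3 (b-2)*q3 (a-1) + q3 (a+2*b+1)) * h3e
          + (X 0*(r3 b*q3 a + X 1*r3 (b-1)*q3 (a-1) + q3 (a+2*b))) * h2e
          + (-((X 1)^2*q3 (a-1)*q3 (a+1)*r3 b*r3 (b-2))
             - X 0*X 1*q3 a*q3 (a-1)*r3 b*r3 (b-1)) * htwo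
      · rw [rodd b, qodd a, show (2*b+1-1:ℤ) = 2*b by ring, rdub b,
          show (2*a+1-1:ℤ) = 2*a by ring, qdub a,
          show (2*a+1 + 2*(2*b+1) : ℤ) = 2*(a+2*b+1)+1 by ring, qodd (a+2*b+1),
          show (a+2*b+1-1:ℤ) = a+2*b by ring]
        linear_combination (X 1*(r3 b*q3 a + X 1*r3 (b-1)*q3 (a-1) + q3 (a+2*b))) * h2e
          + (-((X 1)^2*q3 a*q3 (a-1)*r3 b*r3 (b-1)) + X 0*X 1*q3 (a-1)^2*r3 b^2) * htwo
      · rw [rodd b, show (2*a+1+1:ℤ) = 2*(a+1) by ring, qdub (a+1),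
          show (2*b+1-2:ℤ) = 2*(b-1)+1 by ring, rodd (b-1),
          show (2*a+1-1:ℤ) = 2*a by ring, qdub a,
          show (2*a+1 + 2*(2*b+1) + 1 : ℤ) = 2*(a+2*b+2) by ring, qdub (a+2*b+2),
          show (a+1-1:ℤ) = a by ring, show (b-1-1:ℤ) = b-2 by ring,
          show (a+2*b+2-1:ℤ) = a+2*b+1 by ring, qrec]
        linear_combination
          (X 0*(X 0*(r3 b*q3 a + X 1*r3 (b-1)*q3 (a-1)) + X 1*(X 1*r3 (b-2)*q3 a + r3 (b-1)*q3 (a+1))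
            + X 0*q3 (a+2*b) + X 1*q3 (a+2*b-1))) * h2e
          + (X 1*(X 0*(r3 b*q3 a + X 1*r3 (b-1)*q3 (a-1)) + X 1*(X 1*r3 (b-2)*q3 a + r3 (b-1)*q3 (a+1))
            + X 0*q3 (a+2*b) + X 1*q3 (a+2*b-1))) * h1e
          + (X 0*(r3 b*q3 (a+1) + (X 1)^2*r3 (b-2)*q3 (a-1) + q3 (a+2*b+1))) * h3e
          + (-((X 1)^3*q3 a*q3 (a+1)*r3 (b-1)*r3 (b-2))
             - X 0*X 1*q3 a*q3 (a+1)*r3 b*r3 (b-1)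
             - X 0*(X 1)^2*q3 (a-1)*q3 (a+1)*r3 (b-1)^2
             - X 0*(X 1)^2*q3 (a-1)*q3 (a+1)*r3 b*r3 (b-2)
             + X 0*(X 1)^2*q3 a^2*r3 (b-1)^2
             - X 0*(X 1)^2*q3 a^2*r3 b*r3 (b-2)
             - X 0*(X 1)^3*q3 a*q3 (a-1)*r3 (b-1)*r3 (b-2)
             - X 0^2*X 1*q3 a*q3 (a-1)*r3 b*r3 (b-1)) * htwo

/-- **key linear equations.** For `t ≥ 3`, `2^{t−1} − 1 ≤ n ≤ 2^t − 3`,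
`i = 2^t − 3 − n` and `j = n − 2^{t−1} + 1`:
`w₃ r_{j−2} q_i + r_{j−1} q_{i+1} = q_{n−2}`,
`r_j q_i + w₃ r_{j−1} q_{i−1} = q_{n−1}`, and
`r_j q_{i+1} + w₃² r_{j−2} q_{i−1} = q_n`. -/
theorem linear_equations_q3_r3 (t : ℕ) (ht : 3 ≤ t) (n : ℤ)
    (hn1 : 2 ^ (t - 1) - 1 ≤ n) (hn2 : n ≤ 2 ^ t - 3) :
    let i : ℤ := 2 ^ t - 3 - n
    let j : ℤ := n - 2 ^ (t - 1) + 1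
    X 1 * r3 (j - 2) * q3 i + r3 (j - 1) * q3 (i + 1) = q3 (n - 2) ∧
    r3 j * q3 i + X 1 * r3 (j - 1) * q3 (i - 1) = q3 (n - 1) ∧
    r3 j * q3 (i + 1) + (X 1) ^ 2 * r3 (j - 2) * q3 (i - 1) = q3 n := by
  intro i j
  have hi : i = 2 ^ t - 3 - n := rfl
  have hj : j = n - 2 ^ (t - 1) + 1 := rfl
  clear_value i j
  have hpow : (2:ℤ)^t = 2 * 2^(t-1) := by
    conv_lhs => rw [show t = (t-1)+1 from by omega]
    rw [pow_succ]; ring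
  have hM1 : (0:ℤ) < 2^(t-1) := pow_pos (by norm_num) _
  rw [hpow] at hi hn2
  obtain ⟨M, hM⟩ : ∃ M:ℤ, (2:ℤ)^(t-1) = M := ⟨_, rfl⟩
  rw [hM] at hi hj hn1 hn2 hM1
  obtain ⟨H1, H2, H3⟩ := main3 (t-1) i j (by omega) (by omega) (by rw [hM]; omega)
  refine ⟨?_, ?_, ?_⟩
  · rw [show (n-2:ℤ) = i + 2*j - 1 by omega]; exact H1
  · rw [show (n-1:ℤ) = i + 2*j by omega]; exact H2
  · rw [show (n:ℤ) = i + 2*j + 1 by omega]; exact H3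
end

section
/- For any k ≥ 2 and n ≥ k, in W_2 = F_2[w_2, …, w_k] one has the equality of ideals √(q_{n−k+1}, …, q_n) = (w_2, …, w_k), where the q_j are defined by q_0 = 1, q_{<0} = 0, q_j = ∑_{l=2}^k w_l q_{j−l}. -/
open MvPolynomial

/-- The polynomials `q j ∈ F₂[w₂, …, w_k]` (with `w_l = X (l-2)` for `2 ≤ l ≤ k`):
`q 0 = 1`, `q j = 0` for `j < 0`, and `q j = ∑_{l=2}^k w_l q (j-l)`. -/
noncomputable def qgen (k : ℕ) (j : ℤ) : MvPolynomial (Fin (k - 1)) (ZMod 2) :=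
  if j < 0 then 0
  else if j = 0 then 1
  else ∑ i : Fin (k - 1), X i * qgen k (j - ((i : ℕ) + 2))
termination_by j.toNat
decreasing_by omega

lemma qgen_eq (k : ℕ) (j : ℤ) : qgen k j =
    if j < 0 then 0 else if j = 0 then 1
    else ∑ i : Fin (k - 1), X i * qgen k (j - ((i : ℕ) + 2)) := by
  rw [qgen]

lemma qgen_pos (k : ℕ) (j : ℤ) (hj : 0 < j) :
    qgen k j = ∑ i : Fin (k - 1), X i * qgen k (j - ((i : ℕ) + 2)) := by
  rw [qgen_eq]; rw [if_neg (by omega), if_neg (by omega)]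

/-- For `k ≥ 2` and `n ≥ k`, in `W₂ = F₂[w₂, …, w_k]` one has
`√(q_{n−k+1}, …, q_n) = (w₂, …, w_k)`. -/
theorem radical_of_q_ideal (k n : ℕ) (hk : 2 ≤ k) (hn : k ≤ n) :
    (Ideal.span ((fun j : ℤ => qgen k j) '' Set.Icc ((n : ℤ) - k + 1) (n : ℤ))).radical =
      Ideal.span (Set.range (X : Fin (k - 1) → MvPolynomial (Fin (k - 1)) (ZMod 2))) := by
  set I := Ideal.span ((fun j : ℤ => qgen k j) '' Set.Icc ((n : ℤ) - k + 1) (n : ℤ)) with hI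
  set M := Ideal.span (Set.range (X : Fin (k - 1) → MvPolynomial (Fin (k - 1)) (ZMod 2))) with hMdef
  -- M is the kernel of constantCoeff, hence prime
  have hM : M = RingHom.ker (constantCoeff : MvPolynomial (Fin (k-1)) (ZMod 2) →+* ZMod 2) := by
    ext x
    rw [hMdef, ← Set.image_univ, mem_ideal_span_X_image, RingHom.mem_ker]
    constructor
    · intro h
      rw [constantCoeff_eq]
      by_contra hc
      obtain ⟨i, -, hi⟩ := h 0 (mem_support_iff.2 hc)
      simp at hi
    · intro h m hm
      by_contra hc
      push_neg at hc
      have : m = 0 := by ext i; simpa using hc i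
      rw [this] at hm
      rw [constantCoeff_eq] at h
      exact mem_support_iff.1 hm h
  have hMprime : M.IsPrime := by rw [hM]; exact RingHom.ker_isPrime _
  -- span-membership of the generators in I.radical
  have hspan : ∀ j : ℤ, (n : ℤ) - k + 1 ≤ j → j ≤ n → qgen k j ∈ I.radical := by
    intro j h1 h2
    exact Ideal.le_radical (Ideal.subset_span ⟨j, ⟨h1, h2⟩, rfl⟩)
  -- forward: all q_j, j ≥ n-k+1, are in I.radical
  have hfwd : ∀ j : ℤ, (n : ℤ) - k + 1 ≤ j → qgen k j ∈ I.radical := by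
    have key : ∀ m : ℕ, ∀ j : ℤ, (n : ℤ) - k + 1 ≤ j → j ≤ (n : ℤ) + m → qgen k j ∈ I.radical := by
      intro m
      induction m with
      | zero => intro j h1 h2; exact hspan j h1 (by omega)
      | succ m ih =>
        intro j h1 h2
        rcases le_or_gt j ((n : ℤ) + m) with h | h
        · exact ih j h1 h
        · rw [qgen_pos k j (by omega)]
          apply Ideal.sum_mem
          intro i _
          refine Ideal.mul_mem_left _ _ (ih _ ?_ ?_) <;> · have := i.2; omega
    intro j h1
    exact key (j - n).toNat j h1 (by omega)
  -- main induction: X i ∈ I.radical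
  have hX : ∀ d : ℕ, ∀ i : Fin (k - 1), k - 1 - (i : ℕ) ≤ d + 1 → X i ∈ I.radical := by
    intro d
    induction d with
    | zero =>
      intro i hi
      -- i is the top variable: i = k-2
      have hival : (i : ℕ) = k - 2 := by have := i.2; omega
      -- inner induction on r
      have inner : ∀ r : ℕ, ∀ j : ℤ, (n : ℤ) - k + 1 - r ≤ j →
          (X i : MvPolynomial (Fin (k-1)) (ZMod 2)) ^ r * qgen k j ∈ I.radical := by
        intro r
        induction r with
        | zero =>
          intro j hj
          rw [pow_zero, one_mul]
          exact hfwd j (by omega)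
        | succ r ih =>
          intro j hj
          rcases lt_or_ge j 0 with hneg | hpos
          · rw [qgen_eq, if_pos hneg, mul_zero]; exact Ideal.zero_mem _
          rcases le_or_gt ((n : ℤ) - k + 1 - r) j with h | h
          · rw [pow_succ, mul_comm (X i ^ r) (X i), mul_assoc]
            exact Ideal.mul_mem_left _ _ (ih j h)
          -- j = n - k - r; use the recursion at j + (i+2)
          have hrec := qgen_pos k (j + ((i : ℕ) + 2)) (by omega)
          have hsplit : (X i : MvPolynomial (Fin (k-1)) (ZMod 2)) * qgen k j =
              qgen k (j + ((i : ℕ) + 2)) -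
                ∑ i' ∈ Finset.univ.erase i, X i' * qgen k (j + ((i : ℕ) + 2) - ((i' : ℕ) + 2)) := by
            rw [hrec, ← Finset.add_sum_erase _ _ (Finset.mem_univ i)]
            rw [add_sub_cancel_right, show j + (((i:ℕ):ℤ) + 2) - (((i:ℕ):ℤ) + 2) = j by ring]
          rw [pow_succ, mul_assoc, hsplit, mul_sub]
          apply Ideal.sub_mem
          · exact ih _ (by omega)
          · rw [Finset.mul_sum]
            apply Ideal.sum_mem
            intro i' hi'
            have hne : i' ≠ i := (Finset.mem_erase.1 hi').1
            have hlt : (i' : ℕ) < (i : ℕ) := by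
              have := i'.2; have := Fin.val_ne_of_ne hne; omega
            rw [show (X i : MvPolynomial (Fin (k-1)) (ZMod 2)) ^ r *
                (X i' * qgen k (j + ((i : ℕ) + 2) - ((i' : ℕ) + 2))) =
                X i' * (X i ^ r * qgen k (j + ((i : ℕ) + 2) - ((i' : ℕ) + 2))) by ring]
            exact Ideal.mul_mem_left _ _ (ih _ (by omega))
      have := inner (n - k + 1) 0 (by omega)
      rw [qgen_eq] at this
      norm_num at this
      exact Ideal.mem_radical_of_pow_mem this
    | succ d ihd =>
      intro i hi
      rcases le_or_gt (k - 1 - (i : ℕ)) (d + 1) with h | h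
      · exact ihd i h
      have hgt : ∀ i' : Fin (k - 1), (i : ℕ) < (i' : ℕ) → X i' ∈ I.radical := by
        intro i' hlt
        exact ihd i' (by omega)
      have inner : ∀ r : ℕ, ∀ j : ℤ, (n : ℤ) - k + 1 - r ≤ j →
          (X i : MvPolynomial (Fin (k-1)) (ZMod 2)) ^ r * qgen k j ∈ I.radical := by
        intro r
        induction r with
        | zero =>
          intro j hj
          rw [pow_zero, one_mul]
          exact hfwd j (by omega)
        | succ r ih =>
          intro j hj
          rcases lt_or_ge j 0 with hneg | hpos
          · rw [qgen_eq, if_pos hneg, mul_zero]; exact Ideal.zero_mem _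
          rcases le_or_gt ((n : ℤ) - k + 1 - r) j with h2 | h2
          · rw [pow_succ, mul_comm (X i ^ r) (X i), mul_assoc]
            exact Ideal.mul_mem_left _ _ (ih j h2)
          have hrec := qgen_pos k (j + ((i : ℕ) + 2)) (by omega)
          have hsplit : (X i : MvPolynomial (Fin (k-1)) (ZMod 2)) * qgen k j =
              qgen k (j + ((i : ℕ) + 2)) -
                ∑ i' ∈ Finset.univ.erase i, X i' * qgen k (j + ((i : ℕ) + 2) - ((i' : ℕ) + 2)) := by
            rw [hrec, ← Finset.add_sum_erase _ _ (Finset.mem_univ i)]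
            rw [add_sub_cancel_right, show j + (((i:ℕ):ℤ) + 2) - (((i:ℕ):ℤ) + 2) = j by ring]
          rw [pow_succ, mul_assoc, hsplit, mul_sub]
          apply Ideal.sub_mem
          · exact ih _ (by omega)
          · rw [Finset.mul_sum]
            apply Ideal.sum_mem
            intro i' hi'
            have hne : i' ≠ i := (Finset.mem_erase.1 hi').1
            rcases lt_or_gt_of_ne (Fin.val_ne_of_ne hne) with hlt | hgt'
            · rw [show (X i : MvPolynomial (Fin (k-1)) (ZMod 2)) ^ r *
                  (X i' * qgen k (j + ((i : ℕ) + 2) - ((i' : ℕ) + 2))) =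
                  X i' * (X i ^ r * qgen k (j + ((i : ℕ) + 2) - ((i' : ℕ) + 2))) by ring]
              exact Ideal.mul_mem_left _ _ (ih _ (by omega))
            · exact Ideal.mul_mem_left _ _ (Ideal.mul_mem_right _ _ (hgt i' hgt'))
      have := inner (n - k + 1) 0 (by omega)
      rw [qgen_eq] at this
      norm_num at this
      exact Ideal.mem_radical_of_pow_mem this
  apply le_antisymm
  · -- I.radical ≤ M
    have hIM : I ≤ M := by
      rw [hI, Ideal.span_le]
      rintro _ ⟨j, ⟨h1, h2⟩, rfl⟩
      simp only
      rw [qgen_pos k j (by omega)]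
      apply Ideal.sum_mem
      intro i _
      exact Ideal.mul_mem_right _ _ (Ideal.subset_span ⟨i, rfl⟩)
    calc I.radical ≤ M.radical := Ideal.radical_mono hIM
      _ = M := hMprime.radical
  · rw [hMdef, Ideal.span_le]
    rintro _ ⟨i, rfl⟩
    exact hX (k - 1) i (by omega)
end
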